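/- Fix 0 < p ≤ 1, let n ≥ 1 and let A ⊆ C_n be a nonempty subset. Set ρ = p/2 − Δ(A,p)/n. Suppose that 0 < ρ ≤ 1/4 and that p ≥ (ln 2 + ln(1−2ρ)) / (ln(1−2ρ) − ln(2ρ)). Then (ln|A|)/n ≤ 2ρ·ln(1/(2ρ)) + (1−2ρ)·ln(1/(1−2ρ)). -/

import Mathlib

/-- The randomized Hamming distance `d_l(x,y) = Σ_{i : x i ≠ y i} l i`, where the coordinates
with `l i = 1` are the ones that are counted. -/
def dl {ι : Type*} [Fintype ι] (l x y : ι → Bool) : ℕ :=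
  (Finset.univ.filter fun i => x i ≠ y i ∧ l i = true).card

/-- The randomized Hamming distance from a point `x` to a subset `A`:
`d_l(x,A) = min_{y ∈ A} d_l(x,y)`. -/
noncomputable def dlToSet {ι : Type*} [Fintype ι] (l x : ι → Bool) (A : Set (ι → Bool)) : ℕ :=
  sInf ((fun y => dl l x y) '' A)

/-- The probability `p^{|l|}(1-p)^{n-|l|}` of the vector `l` of `n` independent
Bernoulli(p) coordinates. -/
noncomputable def bernWeight {ι : Type*} [Fintype ι] (p : ℝ) (l : ι → Bool) : ℝ :=
  p ^ (Finset.univ.filter fun i => l i = true).card *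
    (1 - p) ^ (Finset.univ.filter fun i => l i = false).card

/-- `Δ(A,p)`: the expectation of `d_l(x,A)` when `x` is uniform on the cube and `l` has
independent Bernoulli(p) coordinates. -/
noncomputable def avgDistP {ι : Type*} [Fintype ι] [DecidableEq ι] (p : ℝ)
    (A : Set (ι → Bool)) : ℝ :=
  ∑ l : ι → Bool, ∑ x : ι → Bool,
    (bernWeight p l / 2 ^ Fintype.card ι) * (dlToSet l x A : ℝ)

/-!
For every `c ≥ 0` one shows, by induction on the dimension, that
`log |A| + c Δ(A,p) ≤ n · max (log 2) (log (1 + e^{-c}) + pc/2)`.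
Split `A` along the first coordinate and compare everything with the larger slice `B`; only the
block where the first coordinate of `l` is 1 and that of `x` points away from `B` costs more, and
there one may either pay 1 or switch to the smaller slice `B'`. The resulting one-step loss is
`log (1 + r) + (p/2) min (-log r) c` with `r = |B'|/|B| ≤ 1`, which convexity of
`t ↦ e^{pt/2} + e^{(p/2 - 1)t}` bounds by the maximum above.
Taking `c = 2 log ((1 - 2ρ)/(2ρ))` and `Δ(A,p) = n(p/2 - ρ)`, the second branch of the maximum gives
the binary entropy of `2ρ` directly, and the hypothesis on `p` is exactly what the `log 2` branch
needs.
-/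

open Finset Real

section Weights

variable {ι : Type*} [Fintype ι]

lemma bernWeight_eq_prod (p : ℝ) (l : ι → Bool) :
    bernWeight p l = ∏ i, if l i then p else 1 - p := by
  rw [Finset.prod_ite, prod_const, prod_const, bernWeight]
  simp only [Bool.not_eq_true]

lemma bernWeight_nonneg {p : ℝ} (hp0 : 0 ≤ p) (hp1 : p ≤ 1) (l : ι → Bool) :
    0 ≤ bernWeight p l :=
  mul_nonneg (pow_nonneg hp0 _) (pow_nonneg (sub_nonneg.2 hp1) _)

lemma sum_bernWeight [DecidableEq ι] (p : ℝ) : ∑ l : ι → Bool, bernWeight p l = 1 := by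
  simp_rw [bernWeight_eq_prod]
  rw [← Fintype.prod_sum (fun (_ : ι) (b : Bool) => if b then p else 1 - p)]
  simp

lemma bernWeight_cons {n : ℕ} (p : ℝ) (t : Bool) (l : Fin n → Bool) :
    bernWeight p (Fin.cons t l : Fin (n + 1) → Bool) =
      (if t then p else 1 - p) * bernWeight p l := by
  simp_rw [bernWeight_eq_prod, Fin.prod_univ_succ, Fin.cons_zero, Fin.cons_succ]

end Weights

section Expectation

variable {ι : Type*} [Fintype ι] [DecidableEq ι]

noncomputable def cubeExpect (p : ℝ) (f : (ι → Bool) → (ι → Bool) → ℝ) : ℝ :=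
  ∑ l, ∑ x, bernWeight p l / 2 ^ Fintype.card ι * f l x

lemma avgDistP_eq_cubeExpect (p : ℝ) (A : Set (ι → Bool)) :
    avgDistP p A = cubeExpect p (fun l x => dlToSet l x A) := rfl

lemma cubeExpect_mono {p : ℝ} (hp0 : 0 ≤ p) (hp1 : p ≤ 1) {f g : (ι → Bool) → (ι → Bool) → ℝ}
    (h : ∀ l x, f l x ≤ g l x) : cubeExpect p f ≤ cubeExpect p g := by
  unfold cubeExpect
  gcongr with l _ x _
  · have := bernWeight_nonneg hp0 hp1 l
    positivity
  · exact h l x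

lemma cubeExpect_const_add (p k : ℝ) (f : (ι → Bool) → (ι → Bool) → ℝ) :
    cubeExpect p (fun l x => k + f l x) = k + cubeExpect p f := by
  simp only [cubeExpect, mul_add, sum_add_distrib, add_left_inj]
  simp only [sum_const, card_univ, Fintype.card_fun, Fintype.card_bool, nsmul_eq_mul, Nat.cast_pow,
    Nat.cast_ofNat]
  simp_rw [← mul_assoc, mul_div_cancel₀ _ (pow_ne_zero _ (two_ne_zero (α := ℝ))), ← sum_mul,
    sum_bernWeight, one_mul]

lemma cubeExpect_succ {n : ℕ} (p : ℝ) (f : (Fin (n + 1) → Bool) → (Fin (n + 1) → Bool) → ℝ) :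
    cubeExpect p f = ∑ t : Bool, ∑ ε : Bool, (if t then p else 1 - p) / 2 *
      cubeExpect p (fun l x => f (Fin.cons t l) (Fin.cons ε x)) := by
  have sum_cons : ∀ F : (Fin (n + 1) → Bool) → ℝ,
      ∑ g, F g = ∑ b : Bool, ∑ h : Fin n → Bool, F (Fin.cons b h) := fun F => by
    rw [← (Fin.consEquiv fun _ => Bool).sum_comp, Fintype.sum_prod_type]
    rfl
  unfold cubeExpect
  simp_rw [sum_cons, mul_sum]
  refine sum_congr rfl fun t _ => ?_
  rw [sum_comm]
  refine sum_congr rfl fun ε _ => sum_congr rfl fun l _ => sum_congr rfl fun x _ => ?_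
  rw [bernWeight_cons, Fintype.card_fin, Fintype.card_fin, pow_succ]
  ring

end Expectation

section Distance

variable {ι : Type*} [Fintype ι]

lemma dlToSet_le_dl (l x : ι → Bool) {A : Set (ι → Bool)} {y : ι → Bool} (hy : y ∈ A) :
    dlToSet l x A ≤ dl l x y :=
  Nat.sInf_le ⟨y, hy, rfl⟩

lemma exists_dlToSet_eq_dl (l x : ι → Bool) {A : Set (ι → Bool)} (hA : A.Nonempty) :
    ∃ y ∈ A, dlToSet l x A = dl l x y := by
  obtain ⟨y, hy, h⟩ := Nat.sInf_mem (hA.image fun y => dl l x y)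
  exact ⟨y, hy, h.symm⟩

variable {n : ℕ}

lemma dl_cons (t ε b : Bool) (l x y : Fin n → Bool) :
    dl (Fin.cons t l : Fin (n + 1) → Bool) (Fin.cons ε x) (Fin.cons b y)
      = (if ε ≠ b ∧ t then 1 else 0) + dl l x y := by
  simp only [dl, card_filter, Fin.sum_univ_succ, Fin.cons_zero, Fin.cons_succ]

def cubeSlice (A : Set (Fin (n + 1) → Bool)) (b : Bool) : Set (Fin n → Bool) :=
  {y | (Fin.cons b y : Fin (n + 1) → Bool) ∈ A}

lemma dlToSet_cons_le (t ε : Bool) (l x : Fin n → Bool) {A : Set (Fin (n + 1) → Bool)} {b : Bool}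
    (hb : (cubeSlice A b).Nonempty) :
    dlToSet (Fin.cons t l : Fin (n + 1) → Bool) (Fin.cons ε x) A
      ≤ (if ε ≠ b ∧ t then 1 else 0) + dlToSet l x (cubeSlice A b) := by
  obtain ⟨y, hy, hxy⟩ := exists_dlToSet_eq_dl l x hb
  rw [hxy, ← dl_cons]
  exact dlToSet_le_dl _ _ hy

lemma ncard_eq_add_ncard_cubeSlice (A : Set (Fin (n + 1) → Bool)) (b : Bool) :
    A.ncard = (cubeSlice A b).ncard + (cubeSlice A !b).ncard := by
  have hsum : A.ncard = ∑ b, (cubeSlice A b).ncard := by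
    simp only [← Nat.card_coe_set_eq]
    rw [← Nat.card_sigma]
    exact Nat.card_congr <| ((Fin.consEquiv fun _ => Bool).subtypeEquiv fun _ => Iff.rfl).symm.trans
      (Equiv.subtypeProdEquivSigmaSubtype fun b y => (Fin.cons b y : Fin (n + 1) → Bool) ∈ A)
  rw [hsum, Fintype.sum_bool]
  cases b <;> simp [add_comm]

end Distance

section Recursion

variable {n : ℕ} {p : ℝ}

lemma cubeExpect_dlToSet_cons_le (hp0 : 0 ≤ p) (hp1 : p ≤ 1) (t ε : Bool)
    {A : Set (Fin (n + 1) → Bool)} {b : Bool} (hb : (cubeSlice A b).Nonempty) :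
    cubeExpect p (fun l x => (dlToSet (Fin.cons t l : Fin (n + 1) → Bool) (Fin.cons ε x) A : ℝ))
      ≤ (if ε ≠ b ∧ t then 1 else 0) + avgDistP p (cubeSlice A b) := by
  rw [avgDistP_eq_cubeExpect, ← cubeExpect_const_add]
  refine cubeExpect_mono hp0 hp1 fun l x => ?_
  have := dlToSet_cons_le t ε l x hb
  split_ifs at this ⊢ <;> exact_mod_cast this

lemma avgDistP_succ_le (hp0 : 0 ≤ p) (hp1 : p ≤ 1) {A : Set (Fin (n + 1) → Bool)} {b : Bool}
    (hb : (cubeSlice A b).Nonempty) :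
    avgDistP p A ≤ (1 - p / 2) * avgDistP p (cubeSlice A b) +
      p / 2 * cubeExpect p (fun l x => (dlToSet (Fin.cons true l : Fin (n + 1) → Bool)
        (Fin.cons (!b) x) A : ℝ)) := by
  rw [avgDistP_eq_cubeExpect, cubeExpect_succ]
  simp only [Fintype.sum_bool, if_true, Bool.false_eq_true, if_false]
  have hfalse := fun ε => cubeExpect_dlToSet_cons_le hp0 hp1 false ε hb
  have hnear := cubeExpect_dlToSet_cons_le hp0 hp1 true b hb
  simp only [Bool.false_eq_true, and_false, if_false, ne_eq, not_true_eq_false, false_and,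
    zero_add] at hfalse hnear
  have hq : 0 ≤ (1 - p) / 2 := by linarith
  have hp2 : 0 ≤ p / 2 := by linarith
  have := mul_le_mul_of_nonneg_left (hfalse true) hq
  have := mul_le_mul_of_nonneg_left (hfalse false) hq
  have := mul_le_mul_of_nonneg_left hnear hp2
  cases b <;> simp only [Bool.not_true, Bool.not_false] <;> linarith

end Recursion

lemma log_one_add_add_mul_min_le {q c r : ℝ} (hr0 : 0 < r) (hr1 : r ≤ 1) :
    log (1 + r) + q * min (-log r) c ≤ max (log 2) (log (1 + exp (-c)) + q * c) := by
  rcases le_total c (-log r) with h | h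
  · rw [min_eq_right h]
    have hr : r ≤ exp (-c) := by rw [← exp_log hr0]; exact exp_le_exp.2 (by linarith)
    exact le_max_of_le_right (by gcongr)
  · rw [min_eq_left h]
    have hr : r = exp (-(-log r)) := by rw [neg_neg, exp_log hr0]
    set t := -log r
    have hlog : ∀ u, log (1 + exp (-u)) + q * u = log (exp (q * u) + exp ((q - 1) * u)) := by
      intro u
      rw [show exp (q * u) + exp ((q - 1) * u) = (1 + exp (-u)) * exp (q * u) by
        rw [add_mul, one_mul, ← exp_add]; ring_nf, log_mul (by positivity) (exp_pos _).ne', log_exp]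
    have hconv : ConvexOn ℝ Set.univ fun u => exp (q * u) + exp ((q - 1) * u) :=
      (convexOn_exp.comp_linearMap (LinearMap.mul ℝ ℝ q)).add
        (convexOn_exp.comp_linearMap (LinearMap.mul ℝ ℝ (q - 1)))
    have hmax := hconv.le_max_of_mem_Icc (Set.mem_univ 0) (Set.mem_univ c)
      ⟨neg_nonneg.2 (log_nonpos hr0.le hr1), h⟩
    rw [hr, hlog]
    rcases le_max_iff.1 hmax with h0 | hc
    · refine le_max_of_le_left ((log_le_log (by positivity) h0).trans_eq ?_)
      norm_num
    · exact le_max_of_le_right ((log_le_log (by positivity) hc).trans_eq (hlog c).symm)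

lemma log_ncard_add_mul_avgDistP_succ_le {p c m : ℝ} (hp0 : 0 ≤ p) (hp1 : p ≤ 1) (hc : 0 ≤ c)
    {n : ℕ} (ih : ∀ B : Set (Fin n → Bool), B.Nonempty → log B.ncard + c * avgDistP p B ≤ m)
    (A : Set (Fin (n + 1) → Bool)) (hA : A.Nonempty) :
    log A.ncard + c * avgDistP p A ≤ m + max (log 2) (log (1 + exp (-c)) + p / 2 * c) := by
  set K := max (log 2) (log (1 + exp (-c)) + p / 2 * c)
  obtain ⟨b, hbig⟩ : ∃ b, (cubeSlice A !b).ncard ≤ (cubeSlice A b).ncard := by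
    rcases le_total (cubeSlice A true).ncard (cubeSlice A false).ncard with h | h
    exacts [⟨false, h⟩, ⟨true, h⟩]
  have hcard := ncard_eq_add_ncard_cubeSlice A b
  have hB : (cubeSlice A b).Nonempty :=
    Set.nonempty_of_ncard_ne_zero (by have := (Set.ncard_pos (Set.toFinite A)).2 hA; omega)
  have hc_mul := mul_le_mul_of_nonneg_left (avgDistP_succ_le hp0 hp1 hB) hc
  set E := cubeExpect p fun l x =>
    (dlToSet (Fin.cons true l : Fin (n + 1) → Bool) (Fin.cons (!b) x) A : ℝ)
  have hE_near : E ≤ 1 + avgDistP p (cubeSlice A b) := by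
    simpa using cubeExpect_dlToSet_cons_le hp0 hp1 true (!b) hB
  have ihB := ih _ hB
  have hp2 : 0 ≤ p / 2 := by linarith
  rcases (cubeSlice A !b).eq_empty_or_nonempty with hB' | hB'
  · have hK : p / 2 * c ≤ K :=
      le_max_of_le_right (le_add_of_nonneg_left (log_nonneg (by linarith [exp_pos (-c)])))
    rw [hcard, hB', Set.ncard_empty, add_zero]
    linarith [mul_le_mul_of_nonneg_left hE_near (mul_nonneg hc hp2)]
  · have hE_far : E ≤ avgDistP p (cubeSlice A !b) := by
      simpa using cubeExpect_dlToSet_cons_le hp0 hp1 true (!b) hB'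
    have ihB' := ih _ hB'
    rw [hcard, Nat.cast_add]
    set a : ℝ := ((cubeSlice A b).ncard : ℝ)
    set a' : ℝ := ((cubeSlice A !b).ncard : ℝ)
    have ha' : 0 < a' := by simpa [a'] using (Set.ncard_pos (Set.toFinite _)).2 hB'
    have ha'a : a' ≤ a := by simpa [a, a'] using hbig
    have ha : 0 < a := ha'.trans_le ha'a
    have hmin : c * E - (m - log a) ≤ min (log a - log a') c := by
      refine le_min ?_ ?_
      · linarith [mul_le_mul_of_nonneg_left hE_far hc]
      · linarith [mul_le_mul_of_nonneg_left hE_near hc]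
    have hkey := log_one_add_add_mul_min_le (q := p / 2) (c := c) (div_pos ha' ha)
      ((div_le_one ha).2 ha'a)
    rw [log_div ha'.ne' ha.ne', show 1 + a' / a = (a + a') / a by field_simp,
      log_div (by positivity) ha.ne', neg_sub] at hkey
    have hB_bound : c * avgDistP p (cubeSlice A b) ≤ m - log a := by linarith
    linarith [mul_le_mul_of_nonneg_left hmin hp2,
      mul_le_mul_of_nonneg_left hB_bound (by linarith : 0 ≤ 1 - p / 2)]

theorem log_ncard_add_mul_avgDistP_le {p c : ℝ} (hp0 : 0 ≤ p) (hp1 : p ≤ 1) (hc : 0 ≤ c) {n : ℕ}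
    (A : Set (Fin n → Bool)) (hA : A.Nonempty) :
    log A.ncard + c * avgDistP p A ≤ n * max (log 2) (log (1 + exp (-c)) + p / 2 * c) := by
  induction n with
  | zero =>
    obtain ⟨y, hy⟩ := hA
    have hAy : A = {y} := Set.eq_singleton_iff_unique_mem.2 ⟨hy, fun _ _ => Subsingleton.elim _ _⟩
    have hdist : ∀ l x, dlToSet l x A = 0 := fun l x =>
      Nat.eq_zero_of_le_zero ((dlToSet_le_dl l x hy).trans_eq (by simp [dl]))
    simp only [avgDistP, hdist]
    simp [hAy]
  | succ n ih =>
    rw [Nat.cast_succ, add_one_mul]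
    exact log_ncard_add_mul_avgDistP_succ_le hp0 hp1 hc ih A hA

lemma max_log_sub_le_binEntropy {p s L : ℝ} (hs0 : 0 < s) (hs : s ≤ 1 / 2)
    (hL : L = log (1 - s) - log s) (hp : log 2 + log (1 - s) ≤ p * L) :
    max (log 2) (log (1 + exp (-(2 * L))) + p / 2 * (2 * L)) - L * (p - s) ≤ binEntropy s := by
  have hs1 : 0 < 1 - s := by linarith
  have hH : binEntropy s = L * s - log (1 - s) := by
    rw [binEntropy, log_inv, log_inv, hL]
    ring
  rw [hH, sub_le_iff_le_add, max_le_iff]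
  constructor
  · linarith
  · have hexp : exp (-(2 * L)) = s / (1 - s) * (s / (1 - s)) := by
      rw [show -(2 * L) = log (s / (1 - s)) + log (s / (1 - s)) by
        rw [hL, log_div hs0.ne' hs1.ne']; ring, exp_add, exp_log (by positivity)]
    have hle : 1 + s / (1 - s) * (s / (1 - s)) ≤ (1 - s)⁻¹ := by
      have : (1 - s)⁻¹ - (1 + s / (1 - s) * (s / (1 - s))) = s * (1 - 2 * s) / (1 - s) ^ 2 := by
        field_simp
        ring
      have : 0 ≤ s * (1 - 2 * s) / (1 - s) ^ 2 := by
        apply div_nonneg (mul_nonneg hs0.le (by linarith)) (sq_nonneg _)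
      linarith
    have := log_le_log (by positivity) hle
    rw [log_inv, ← hexp] at this
    linarith

/-- Inequalities (4.5.2)-(4.5.3): for `0 < p ≤ 1`, nonempty `A ⊆ C_n` and
`ρ = p/2 - Δ(A,p)/n`, if `0 < ρ ≤ 1/4` and
`p ≥ (ln 2 + ln(1-2ρ))/(ln(1-2ρ) - ln(2ρ))`, then
`(ln |A|)/n ≤ 2ρ·ln(1/(2ρ)) + (1-2ρ)·ln(1/(1-2ρ))`. -/
theorem stmt8 (p : ℝ) (hp0 : 0 < p) (hp1 : p ≤ 1) {n : ℕ} (hn : 1 ≤ n)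
    (A : Set (Fin n → Bool)) (hA : A.Nonempty)
    (ρ : ℝ) (hρ : ρ = p / 2 - avgDistP p A / n)
    (hρ0 : 0 < ρ) (hρ4 : ρ ≤ 1 / 4)
    (hp : (Real.log 2 + Real.log (1 - 2 * ρ)) / (Real.log (1 - 2 * ρ) - Real.log (2 * ρ)) ≤ p) :
    Real.log (Nat.card A) / n ≤
      2 * ρ * Real.log (1 / (2 * ρ)) + (1 - 2 * ρ) * Real.log (1 / (1 - 2 * ρ)) := by
  have hn0 : (0 : ℝ) < n := by exact_mod_cast hn
  have hΔ : avgDistP p A = n * (p - 2 * ρ) / 2 := by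
    field_simp at hρ
    linarith
  set s := 2 * ρ
  have hs0 : 0 < s := by linarith
  have hs : s ≤ 1 / 2 := by linarith
  set L := log (1 - s) - log s with hL
  have hL0 : 0 ≤ L := sub_nonneg.2 (log_le_log hs0 (by linarith))
  have hpL : log 2 + log (1 - s) ≤ p * L := by
    rcases hL0.eq_or_lt with hL0 | hL0
    · have : log 2 + log s ≤ 0 := by
        rw [← log_mul two_ne_zero hs0.ne']
        exact log_nonpos (by positivity) (by linarith)
      rw [← hL0, mul_zero]
      linarith
    · exact (div_le_iff₀ hL0).1 hp
  have hmain := log_ncard_add_mul_avgDistP_le hp0.le hp1 (mul_nonneg zero_le_two hL0) A hA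
  have hent := max_log_sub_le_binEntropy hs0 hs hL hpL
  rw [Nat.card_coe_set_eq, one_div, one_div, ← binEntropy, div_le_iff₀ hn0]
  rw [hΔ] at hmain
  linarith [mul_le_mul_of_nonneg_left hent hn0.le]
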